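/- arXiv:1907.11507 — 6 statements merged into one kernel-verified Lean document; each statement's English description precedes it below -/
import Mathlib

section
/- If B is a 2×2 real matrix all of whose entries are positive and n ≥ 1 is an integer, then S = Σ_{k=1}^{n} ((Bᵀ)ᵏ·J − J·Bᵏ) belongs to 𝒜; in particular det S < 0, so S has exactly one positive and one negative eigenvalue and hence signature 0. -/
/-
Since Jᵀ = -J, every summand Mᵀ J - J M is symmetric, with diagonal (-2 M₁₀, 2 M₀₁).
For M = Bᵏ these entries are positive, so S is symmetric with S₀₀ < 0 < S₁₁, hence
det S = S₀₀ S₁₁ - S₀₁² < 0. A real 2×2 matrix of negative determinant has characteristic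
polynomial X² - tX + d with d < 0, whose two real roots have product d, so opposite signs.
-/

open Matrix Polynomial

/-- The 2×2 matrix J = [[0,1],[-1,0]]. -/
def matJ : Matrix (Fin 2) (Fin 2) ℝ := !![0, 1; -1, 0]

namespace Matrix

lemma pow_apply_pos {n α : Type*} [Fintype n] [DecidableEq n] [Semiring α] [PartialOrder α]
    [IsStrictOrderedRing α] {A : Matrix n n α} (hA : ∀ i j, 0 < A i j) {k : ℕ} (hk : 1 ≤ k) :
    ∀ i j, 0 < (A ^ k) i j := by
  induction k, hk using Nat.le_induction with
  | base => simpa using hA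
  | succ m _ ih =>
    intro i j
    rw [pow_succ, mul_apply]
    exact Finset.sum_pos (fun l _ => mul_pos (ih i l) (hA l j)) ⟨i, Finset.mem_univ i⟩

lemma isSymm_transpose_mul_sub_mul {n α : Type*} [Fintype n] [CommRing α]
    {J : Matrix n n α} (hJ : Jᵀ = -J) (M : Matrix n n α) : (Mᵀ * J - J * M).IsSymm := by
  simp only [IsSymm, transpose_sub, transpose_mul, transpose_transpose, hJ, neg_mul, mul_neg]
  abel

lemma det_neg_of_isSymm {α : Type*} [CommRing α] [LinearOrder α] [IsStrictOrderedRing α]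
    {A : Matrix (Fin 2) (Fin 2) α} (hA : A.IsSymm) (h₀ : A 0 0 < 0) (h₁ : 0 < A 1 1) :
    A.det < 0 := by
  rw [det_fin_two, hA.apply 1 0]
  nlinarith [sq_nonneg (A 0 1), mul_neg_of_neg_of_pos h₀ h₁]

lemma exists_charpoly_eq_of_det_neg {A : Matrix (Fin 2) (Fin 2) ℝ} (h : A.det < 0) :
    ∃ lneg lpos : ℝ, lneg < 0 ∧ 0 < lpos ∧ A.charpoly = (X - C lneg) * (X - C lpos) := by
  set t := A.trace
  set s := √(t ^ 2 - 4 * A.det)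
  have hs : s ^ 2 = t ^ 2 - 4 * A.det := Real.sq_sqrt (by nlinarith [sq_nonneg t])
  have ht : |t| < s := by
    rw [← Real.sqrt_sq_eq_abs]
    exact Real.sqrt_lt_sqrt (sq_nonneg t) (by linarith)
  refine ⟨(t - s) / 2, (t + s) / 2, by linarith [le_abs_self t], by linarith [neg_abs_le t], ?_⟩
  have htr : A.trace = (t - s) / 2 + (t + s) / 2 := by ring
  have hdet : A.det = (t - s) / 2 * ((t + s) / 2) := by linear_combination hs / 4
  rw [charpoly_fin_two, htr, hdet, C_add, C_mul]
  ring

end Matrix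

lemma transpose_mul_matJ_sub_matJ_mul_apply_zero_zero (M : Matrix (Fin 2) (Fin 2) ℝ) :
    (Mᵀ * matJ - matJ * M) 0 0 = -2 * M 1 0 := by
  simp [matJ, mul_apply, vecMul, dotProduct, Fin.sum_univ_two]
  ring

lemma transpose_mul_matJ_sub_matJ_mul_apply_one_one (M : Matrix (Fin 2) (Fin 2) ℝ) :
    (Mᵀ * matJ - matJ * M) 1 1 = 2 * M 0 1 := by
  simp [matJ, mul_apply, vecMul, dotProduct, Fin.sum_univ_two]
  ring

lemma transpose_matJ : matJᵀ = -matJ := by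
  ext i j
  fin_cases i <;> fin_cases j <;> simp [matJ]

/-- If B is a 2×2 real matrix with all entries positive and n ≥ 1, then
S = Σ_{k=1}^{n} ((Bᵀ)ᵏ·J − J·Bᵏ) belongs to 𝒜 (symmetric, negative (1,1) entry,
positive (2,2) entry); in particular det S < 0, so S has exactly one positive and one
negative eigenvalue and hence signature 0. -/
theorem stmt_2 (B : Matrix (Fin 2) (Fin 2) ℝ)
    (hpos : ∀ i j, 0 < B i j) (n : ℕ) (hn : 1 ≤ n) :
    let S : Matrix (Fin 2) (Fin 2) ℝ := ∑ k ∈ Finset.Icc 1 n, (Bᵀ ^ k * matJ - matJ * B ^ k)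
    S.IsSymm ∧ S 0 0 < 0 ∧ 0 < S 1 1 ∧ S.det < 0 ∧
      ∃ lneg lpos : ℝ, lneg < 0 ∧ 0 < lpos ∧
        S.charpoly = (X - C lneg) * (X - C lpos) := by
  intro S
  have hne : (Finset.Icc 1 n).Nonempty := ⟨1, Finset.mem_Icc.mpr ⟨le_rfl, hn⟩⟩
  have hBk : ∀ k ∈ Finset.Icc 1 n, ∀ i j, 0 < (B ^ k) i j :=
    fun k hk => pow_apply_pos hpos (Finset.mem_Icc.mp hk).1
  have hsymm : S.IsSymm :=
    Finset.sum_induction _ IsSymm (fun _ _ => IsSymm.add) isSymm_zero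
      fun k _ => transpose_pow B k ▸ isSymm_transpose_mul_sub_mul transpose_matJ (B ^ k)
  have h₀ : S 0 0 < 0 := by
    simp only [S, Matrix.sum_apply]
    refine Finset.sum_neg (fun k hk => ?_) hne
    rw [← transpose_pow, transpose_mul_matJ_sub_matJ_mul_apply_zero_zero]
    linarith [hBk k hk 1 0]
  have h₁ : 0 < S 1 1 := by
    simp only [S, Matrix.sum_apply]
    refine Finset.sum_pos (fun k hk => ?_) hne
    rw [← transpose_pow, transpose_mul_matJ_sub_matJ_mul_apply_one_one]
    linarith [hBk k hk 0 1]
  have hdet := det_neg_of_isSymm hsymm h₀ h₁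
  exact ⟨hsymm, h₀, h₁, hdet, exists_charpoly_eq_of_det_neg hdet⟩
end

section
/- Let A, B, C be Lagrangian subspaces of a finite-dimensional real symplectic vector space (V,Q). Suppose b' ∈ B and a₁ + b' + c₁ = 0 = a₂ + b' + c₂ with a₁, a₂ ∈ A and c₁, c₂ ∈ C. Then for every b ∈ B ∩ (A + C) one has Q(b, c₁) = Q(b, c₂). Hence Wall's pairing Ψ'(b, b') := Q(b, c') is well-defined on B ∩ (C + A), independent of the chosen decomposition of b'. -/
/-- A subspace `L` of a symplectic vector space `(V,Q)` is Lagrangian if `Q` vanishes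
identically on `L × L` and `dim L` is half the dimension of `V`. -/
def IsLagrangian {V : Type*} [AddCommGroup V] [Module ℝ V]
    (Q : V →ₗ[ℝ] V →ₗ[ℝ] ℝ) (L : Submodule ℝ V) : Prop :=
  (∀ x ∈ L, ∀ y ∈ L, Q x y = 0) ∧ 2 * Module.finrank ℝ ↥L = Module.finrank ℝ V

/-! The two decompositions of `b'` differ by `c₁ - c₂ = a₂ - a₁ ∈ A ∩ C`, and the intersection
of two isotropic subspaces is orthogonal to their sum. -/

theorem LinearMap.apply_eq_zero_of_mem_sup_of_mem_inf {R M N : Type*} [CommSemiring R]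
    [AddCommMonoid M] [Module R M] [AddCommMonoid N] [Module R N]
    (Q : M →ₗ[R] M →ₗ[R] N) {A C : Submodule R M}
    (hA : ∀ x ∈ A, ∀ y ∈ A, Q x y = 0) (hC : ∀ x ∈ C, ∀ y ∈ C, Q x y = 0)
    {x y : M} (hx : x ∈ A ⊔ C) (hy : y ∈ A ⊓ C) : Q x y = 0 := by
  obtain ⟨a, ha, c, hc, rfl⟩ := Submodule.mem_sup.mp hx
  rw [map_add, LinearMap.add_apply, hA a ha y hy.1, hC c hc y hy.2, add_zero]

theorem stmt_7_general {V : Type*} [AddCommGroup V] [Module ℝ V]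
    (Q : V →ₗ[ℝ] V →ₗ[ℝ] ℝ)
    (A B C : Submodule ℝ V)
    (hA : IsLagrangian Q A) (hC : IsLagrangian Q C)
    (b' a₁ a₂ c₁ c₂ : V)
    (ha₁ : a₁ ∈ A) (ha₂ : a₂ ∈ A) (hc₁ : c₁ ∈ C) (hc₂ : c₂ ∈ C)
    (h1 : a₁ + b' + c₁ = 0) (h2 : a₂ + b' + c₂ = 0) :
    ∀ b ∈ B ⊓ (A ⊔ C), Q b c₁ = Q b c₂ := by
  intro b hb
  have hdiff : c₁ - c₂ = a₂ - a₁ := by linear_combination (norm := abel) h1 - h2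
  have hmem : c₁ - c₂ ∈ A ⊓ C := ⟨hdiff ▸ A.sub_mem ha₂ ha₁, C.sub_mem hc₁ hc₂⟩
  have horth := Q.apply_eq_zero_of_mem_sup_of_mem_inf hA.1 hC.1 hb.2 hmem
  rwa [map_sub, sub_eq_zero] at horth

/-- For Lagrangians A, B, C, if b' ∈ B and a₁ + b' + c₁ = 0 = a₂ + b' + c₂
with aᵢ ∈ A, cᵢ ∈ C, then Q(b,c₁) = Q(b,c₂) for every b ∈ B ∩ (A + C); hence Wall's
pairing Ψ'(b,b') = Q(b,c') is well-defined on B ∩ (C + A). -/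
theorem stmt_7 {V : Type*} [AddCommGroup V] [Module ℝ V] [FiniteDimensional ℝ V]
    (Q : V →ₗ[ℝ] V →ₗ[ℝ] ℝ)
    (hAlt : ∀ x, Q x x = 0)
    (hNd : ∀ x, (∀ y, Q x y = 0) → x = 0)
    (A B C : Submodule ℝ V)
    (hA : IsLagrangian Q A) (hB : IsLagrangian Q B) (hC : IsLagrangian Q C)
    (b' a₁ a₂ c₁ c₂ : V)
    (hb' : b' ∈ B) (ha₁ : a₁ ∈ A) (ha₂ : a₂ ∈ A) (hc₁ : c₁ ∈ C) (hc₂ : c₂ ∈ C)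
    (h1 : a₁ + b' + c₁ = 0) (h2 : a₂ + b' + c₂ = 0) :
    ∀ b ∈ B ⊓ (A ⊔ C), Q b c₁ = Q b c₂ :=
  stmt_7_general Q A B C hA hC b' a₁ a₂ c₁ c₂ ha₁ ha₂ hc₁ hc₂ h1 h2
end

section
/- Let A, B, C be Lagrangian subspaces of a finite-dimensional real symplectic vector space (V,Q). If a₁ + b₁ + c₁ = 0 and a₂ + b₂ + c₂ = 0 with a₁, a₂ ∈ A, b₁, b₂ ∈ B, c₁, c₂ ∈ C, then Q(b₁, c₂) = Q(b₂, c₁); that is, Wall's pairing Ψ' on B ∩ (C + A) is symmetric. -/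
namespace LinearMap.IsAlt

variable {R M N : Type*} [CommRing R] [AddCommGroup M] [Module R M] [AddCommGroup N] [Module R N]
  {Q : M →ₗ[R] M →ₗ[R] N}

/-- Expanding `Q a₁ a₂ = 0` with `aᵢ = -(bᵢ + cᵢ)` leaves `Q b₁ c₂ + Q c₁ b₂ = 0`. -/
theorem apply_eq_apply_of_isotropic (hQ : Q.IsAlt) {A B C : Submodule R M}
    (hA : ∀ x ∈ A, ∀ y ∈ A, Q x y = 0) (hB : ∀ x ∈ B, ∀ y ∈ B, Q x y = 0)
    (hC : ∀ x ∈ C, ∀ y ∈ C, Q x y = 0) {a₁ a₂ b₁ b₂ c₁ c₂ : M}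
    (ha₁ : a₁ ∈ A) (ha₂ : a₂ ∈ A) (hb₁ : b₁ ∈ B) (hb₂ : b₂ ∈ B)
    (hc₁ : c₁ ∈ C) (hc₂ : c₂ ∈ C)
    (h₁ : a₁ + b₁ + c₁ = 0) (h₂ : a₂ + b₂ + c₂ = 0) :
    Q b₁ c₂ = Q b₂ c₁ := by
  have hbc₁ : b₁ + c₁ = -a₁ := by rw [eq_neg_iff_add_eq_zero, ← h₁]; abel
  have hbc₂ : b₂ + c₂ = -a₂ := by rw [eq_neg_iff_add_eq_zero, ← h₂]; abel
  have hsum : Q (b₁ + c₁) (b₂ + c₂) = 0 := by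
    rw [hbc₁, hbc₂, map_neg, map_neg, neg_apply, neg_neg, hA a₁ ha₁ a₂ ha₂]
  rw [map_add, map_add, add_apply, add_apply, hB b₁ hb₁ b₂ hb₂, hC c₁ hc₁ c₂ hc₂,
    zero_add, add_zero, ← hQ.neg b₂ c₁] at hsum
  exact (neg_add_eq_zero.mp hsum).symm

end LinearMap.IsAlt

theorem stmt_8_general {V : Type*} [AddCommGroup V] [Module ℝ V]
    (Q : V →ₗ[ℝ] V →ₗ[ℝ] ℝ)
    (hAlt : ∀ x, Q x x = 0)
    (A B C : Submodule ℝ V)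
    (hA : IsLagrangian Q A) (hB : IsLagrangian Q B) (hC : IsLagrangian Q C)
    (a₁ a₂ b₁ b₂ c₁ c₂ : V)
    (ha₁ : a₁ ∈ A) (ha₂ : a₂ ∈ A) (hb₁ : b₁ ∈ B) (hb₂ : b₂ ∈ B)
    (hc₁ : c₁ ∈ C) (hc₂ : c₂ ∈ C)
    (h1 : a₁ + b₁ + c₁ = 0) (h2 : a₂ + b₂ + c₂ = 0) :
    Q b₁ c₂ = Q b₂ c₁ :=
  LinearMap.IsAlt.apply_eq_apply_of_isotropic hAlt hA.1 hB.1 hC.1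
    ha₁ ha₂ hb₁ hb₂ hc₁ hc₂ h1 h2

/-- For Lagrangians A, B, C, if a₁ + b₁ + c₁ = 0 and a₂ + b₂ + c₂ = 0 with
aᵢ ∈ A, bᵢ ∈ B, cᵢ ∈ C, then Q(b₁,c₂) = Q(b₂,c₁); i.e. Wall's pairing Ψ' on
B ∩ (C + A) is symmetric. -/
theorem stmt_8 {V : Type*} [AddCommGroup V] [Module ℝ V] [FiniteDimensional ℝ V]
    (Q : V →ₗ[ℝ] V →ₗ[ℝ] ℝ)
    (hAlt : ∀ x, Q x x = 0)
    (hNd : ∀ x, (∀ y, Q x y = 0) → x = 0)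
    (A B C : Submodule ℝ V)
    (hA : IsLagrangian Q A) (hB : IsLagrangian Q B) (hC : IsLagrangian Q C)
    (a₁ a₂ b₁ b₂ c₁ c₂ : V)
    (ha₁ : a₁ ∈ A) (ha₂ : a₂ ∈ A) (hb₁ : b₁ ∈ B) (hb₂ : b₂ ∈ B)
    (hc₁ : c₁ ∈ C) (hc₂ : c₂ ∈ C)
    (h1 : a₁ + b₁ + c₁ = 0) (h2 : a₂ + b₂ + c₂ = 0) :
    Q b₁ c₂ = Q b₂ c₁ :=
  stmt_8_general Q hAlt A B C hA hB hC a₁ a₂ b₁ b₂ c₁ c₂ ha₁ ha₂ hb₁ hb₂ hc₁ hc₂ h1 h2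
end

section
/- Let A, B, C be Lagrangian subspaces of a finite-dimensional real symplectic vector space (V,Q). If b ∈ B ∩ (C + A) and b' ∈ (B ∩ C) + (B ∩ A), then for any decomposition a' + b' + c' = 0 with a' ∈ A and c' ∈ C one has Q(b, c') = 0. Hence Wall's pairing Ψ' descends to a symmetric bilinear form Ψ on the quotient W = (B ∩ (C + A)) / ((B ∩ C) + (B ∩ A)). -/
/-!
Write `b = c + a` with `c ∈ C`, `a ∈ A`. Isotropy of `C` and `A` gives
`Q b c' = Q a c' = -Q a a' - Q a b' = -Q a b'`. Since `a = b - c ∈ B + C`, the form `Q a` vanishes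
on `B ∩ C` (by isotropy of `B` and `C`) and on `B ∩ A` (by isotropy of `A`), hence on `b'`.
-/

section Isotropic

variable {R M N : Type*} [CommRing R] [AddCommGroup M] [Module R M] [AddCommGroup N] [Module R N]
  {Q : M →ₗ[R] M →ₗ[R] N} {A B C : Submodule R M}

theorem apply_eq_zero_of_mem_sup_of_mem_inf (hB : ∀ x ∈ B, ∀ y ∈ B, Q x y = 0)
    (hC : ∀ x ∈ C, ∀ y ∈ C, Q x y = 0) {x y : M} (hx : x ∈ B ⊔ C) (hy : y ∈ B ⊓ C) :
    Q x y = 0 := by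
  obtain ⟨b, hb, c, hc, rfl⟩ := Submodule.mem_sup.mp hx
  rw [map_add, LinearMap.add_apply, hB b hb y hy.1, hC c hc y hy.2, add_zero]

theorem sup_inf_le_ker_apply (hA : ∀ x ∈ A, ∀ y ∈ A, Q x y = 0)
    (hB : ∀ x ∈ B, ∀ y ∈ B, Q x y = 0) (hC : ∀ x ∈ C, ∀ y ∈ C, Q x y = 0)
    {a : M} (ha : a ∈ A) (haBC : a ∈ B ⊔ C) :
    B ⊓ C ⊔ B ⊓ A ≤ LinearMap.ker (Q a) :=
  sup_le (fun _ hy => apply_eq_zero_of_mem_sup_of_mem_inf hB hC haBC hy)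
    (fun y hy => hA a ha y hy.2)

end Isotropic

theorem stmt_9_general {V : Type*} [AddCommGroup V] [Module ℝ V]
    (Q : V →ₗ[ℝ] V →ₗ[ℝ] ℝ)
    (A B C : Submodule ℝ V)
    (hA : IsLagrangian Q A) (hB : IsLagrangian Q B) (hC : IsLagrangian Q C)
    (b : V) (hb : b ∈ B ⊓ (C ⊔ A))
    (b' : V) (hb' : b' ∈ (B ⊓ C) ⊔ (B ⊓ A))
    (a' c' : V) (ha' : a' ∈ A) (hc' : c' ∈ C)
    (hsum : a' + b' + c' = 0) :
    Q b c' = 0 := by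
  obtain ⟨hbB, hbCA⟩ := hb
  obtain ⟨c, hc, a, ha, rfl⟩ := Submodule.mem_sup.mp hbCA
  have haBC : a ∈ B ⊔ C := by
    simpa using Submodule.sub_mem _ (Submodule.mem_sup_left hbB) (Submodule.mem_sup_right hc)
  have hab' : Q a b' = 0 := sup_inf_le_ker_apply hA.1 hB.1 hC.1 ha haBC hb'
  have hc'_eq : c' = -(a' + b') := eq_neg_of_add_eq_zero_left ((add_comm _ _).trans hsum)
  calc Q (c + a) c' = Q a c' := by rw [map_add, LinearMap.add_apply, hC.1 c hc c' hc', zero_add]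
    _ = -(Q a a' + Q a b') := by rw [hc'_eq, map_neg, map_add]
    _ = 0 := by rw [hA.1 a ha a' ha', hab', add_zero, neg_zero]

/-- For Lagrangians A, B, C, if b ∈ B ∩ (C + A) and
b' ∈ (B ∩ C) + (B ∩ A), then for any decomposition a' + b' + c' = 0 with a' ∈ A and
c' ∈ C one has Q(b,c') = 0; hence Wall's pairing Ψ' descends to a symmetric bilinear
form Ψ on the quotient W = (B ∩ (C + A)) / ((B ∩ C) + (B ∩ A)). -/
theorem stmt_9 {V : Type*} [AddCommGroup V] [Module ℝ V] [FiniteDimensional ℝ V]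
    (Q : V →ₗ[ℝ] V →ₗ[ℝ] ℝ)
    (hAlt : ∀ x, Q x x = 0)
    (hNd : ∀ x, (∀ y, Q x y = 0) → x = 0)
    (A B C : Submodule ℝ V)
    (hA : IsLagrangian Q A) (hB : IsLagrangian Q B) (hC : IsLagrangian Q C)
    (b : V) (hb : b ∈ B ⊓ (C ⊔ A))
    (b' : V) (hb' : b' ∈ (B ⊓ C) ⊔ (B ⊓ A))
    (a' c' : V) (ha' : a' ∈ A) (hc' : c' ∈ C)
    (hsum : a' + b' + c' = 0) :
    Q b c' = 0 :=
  stmt_9_general Q A B C hA hB hC b hb b' hb' a' c' ha' hc' hsum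
end

section
/- Let A, B, C be Lagrangian subspaces of a finite-dimensional real symplectic vector space (V,Q). Suppose b ∈ B ∩ (C + A) satisfies Q(b, c') = 0 for every b' ∈ B ∩ (C + A) and every decomposition a' + b' + c' = 0 with a' ∈ A, c' ∈ C. Then b ∈ (B ∩ C) + (B ∩ A). In other words, the induced symmetric bilinear form Ψ on W = (B ∩ (C + A)) / ((B ∩ C) + (B ∩ A)) is nondegenerate. -/
open Module

namespace LinearMap.BilinForm

theorem orthogonal_sup {R M : Type*} [CommRing R] [AddCommGroup M] [Module R M]
    (Q : LinearMap.BilinForm R M) (X Y : Submodule R M) :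
    Q.orthogonal (X ⊔ Y) = Q.orthogonal X ⊓ Q.orthogonal Y := by
  refine le_antisymm (le_inf (Q.orthogonal_le le_sup_left) (Q.orthogonal_le le_sup_right)) ?_
  rintro x ⟨hxX, hxY⟩ n hn
  obtain ⟨y, hy, z, hz, rfl⟩ := Submodule.mem_sup.mp hn
  show Q (y + z) x = 0
  rw [map_add, LinearMap.add_apply, hxX y hy, hxY z hz, add_zero]

variable {K V : Type*} [Field K] [AddCommGroup V] [Module K V] [FiniteDimensional K V]
  {Q : LinearMap.BilinForm K V}

theorem orthogonal_inf (hQ : Q.Nondegenerate) (hR : Q.IsRefl) (X Y : Submodule K V) :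
    Q.orthogonal (X ⊓ Y) = Q.orthogonal X ⊔ Q.orthogonal Y := by
  conv_lhs => rw [← Q.orthogonal_orthogonal hQ hR X, ← Q.orthogonal_orthogonal hQ hR Y,
    ← orthogonal_sup]
  rw [Q.orthogonal_orthogonal hQ hR]

theorem orthogonal_eq_self_of_isotropic_of_two_mul_finrank (hQ : Q.Nondegenerate)
    {L : Submodule K V} (hiso : ∀ x ∈ L, ∀ y ∈ L, Q x y = 0)
    (hdim : 2 * finrank K L = finrank K V) : Q.orthogonal L = L := by
  have hle : L ≤ Q.orthogonal L := fun x hx y hy => hiso y hy x hx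
  have hdim' : finrank K (Q.orthogonal L) = finrank K V - finrank K L := finrank_orthogonal hQ L
  exact (Submodule.eq_of_le_of_finrank_le hle (by omega)).symm

end LinearMap.BilinForm

open LinearMap.BilinForm

section Lagrangian

variable {V : Type*} [AddCommGroup V] [Module ℝ V] {Q : LinearMap.BilinForm ℝ V}

theorem IsLagrangian.orthogonal_eq [FiniteDimensional ℝ V] (hQ : Q.Nondegenerate)
    {L : Submodule ℝ V} (hL : IsLagrangian Q L) : Q.orthogonal L = L :=
  orthogonal_eq_self_of_isotropic_of_two_mul_finrank hQ hL.1 hL.2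

theorem orthogonal_sup_inf_sup_of_isLagrangian [FiniteDimensional ℝ V] (hQ : Q.Nondegenerate)
    (hR : Q.IsRefl) {A B C : Submodule ℝ V} (hA : IsLagrangian Q A) (hB : IsLagrangian Q B)
    (hC : IsLagrangian Q C) : Q.orthogonal (B ⊔ C ⊓ (A ⊔ B)) = B ⊓ C ⊔ B ⊓ A := by
  rw [orthogonal_sup, orthogonal_inf hQ hR, orthogonal_sup, hA.orthogonal_eq hQ,
    hB.orthogonal_eq hQ, hC.orthogonal_eq hQ, inf_comm A B,
    ← inf_sup_assoc_of_le C inf_le_left]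

theorem mem_orthogonal_inf_sup_of_wall_pairing_eq_zero (hR : Q.IsRefl)
    {A B C : Submodule ℝ V} {b : V}
    (hvanish : ∀ b' ∈ B ⊓ (C ⊔ A), ∀ a' ∈ A, ∀ c' ∈ C, a' + b' + c' = 0 → Q b c' = 0) :
    b ∈ Q.orthogonal (C ⊓ (A ⊔ B)) := by
  rintro c ⟨hcC, hcAB⟩
  obtain ⟨a, ha, b', hb', rfl⟩ := Submodule.mem_sup.mp hcAB
  have hb'CA : -b' ∈ B ⊓ (C ⊔ A) := by
    refine ⟨neg_mem hb', ?_⟩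
    rw [show -b' = -(a + b') + a by abel]
    exact Submodule.add_mem_sup (neg_mem hcC) ha
  exact hR _ _ (hvanish (-b') hb'CA (-a) (neg_mem ha) _ hcC (by abel))

end Lagrangian

/-- For Lagrangians A, B, C, if b ∈ B ∩ (C + A) pairs to zero (via Wall's
pairing) with every b' ∈ B ∩ (C + A) along every decomposition a' + b' + c' = 0 with
a' ∈ A, c' ∈ C, then b ∈ (B ∩ C) + (B ∩ A); i.e. the induced symmetric bilinear form Ψ
on W = (B ∩ (C + A)) / ((B ∩ C) + (B ∩ A)) is nondegenerate. -/
theorem stmt_10 {V : Type*} [AddCommGroup V] [Module ℝ V] [FiniteDimensional ℝ V]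
    (Q : V →ₗ[ℝ] V →ₗ[ℝ] ℝ)
    (hAlt : ∀ x, Q x x = 0)
    (hNd : ∀ x, (∀ y, Q x y = 0) → x = 0)
    (A B C : Submodule ℝ V)
    (hA : IsLagrangian Q A) (hB : IsLagrangian Q B) (hC : IsLagrangian Q C)
    (b : V) (hb : b ∈ B ⊓ (C ⊔ A))
    (hvanish : ∀ b' ∈ B ⊓ (C ⊔ A), ∀ a' ∈ A, ∀ c' ∈ C, a' + b' + c' = 0 → Q b c' = 0) :
    b ∈ (B ⊓ C) ⊔ (B ⊓ A) := by
  have hR : Q.IsRefl := LinearMap.IsAlt.isRefl hAlt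
  have hQ : LinearMap.BilinForm.Nondegenerate Q := hR.nondegenerate_iff_separatingLeft.mpr hNd
  rw [← orthogonal_sup_inf_sup_of_isLagrangian hQ hR hA hB hC, orthogonal_sup]
  exact ⟨(hB.orthogonal_eq hQ).symm ▸ hb.1,
    mem_orthogonal_inf_sup_of_wall_pairing_eq_zero hR hvanish⟩
end

section
/- Let (V,Q) be a finite-dimensional real symplectic vector space, φ : V → V a symplectic map, and m ≥ 1 an integer. If z₁ ∈ V satisfies φ^{m+1}(z₁) = z₁, then I_{φ,m}(z₁, z₂) = 0 for all z₂ ∈ V. Hence I_{φ,m} descends to a well-defined symmetric bilinear pairing on the quotient V / ker(φ^{m+1} − id). -/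
/-!
Since `Q` is `φ`-invariant and `φ^(m+1) z₁ = z₁`, moving `φ^i` across `Q` gives
`Q z₁ (φ^i z₂) = Q (φ^(m+1-i) z₁) z₂`; the reflection `i ↦ m+1-i` of `{1, …, m}` then turns
the second sum of `I_{φ,m}(z₁, z₂)` into the first. Applying this to the flipped form gives the
vanishing of `I_{φ,m}(z₂, z₁)`.
-/

open Finset

theorem Finset.sum_Icc_one_reflect {M : Type*} [AddCommMonoid M] (f : ℕ → M) (m : ℕ) :
    ∑ i ∈ Icc 1 m, f (m + 1 - i) = ∑ i ∈ Icc 1 m, f i := by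
  refine sum_nbij' (fun i ↦ m + 1 - i) (fun i ↦ m + 1 - i) ?_ ?_ ?_ ?_ fun _ _ ↦ rfl <;>
    intro i hi <;> grind [coe_Icc]

namespace LinearMap

variable {R M N : Type*} [CommSemiring R] [AddCommMonoid M] [AddCommMonoid N]
  [Module R M] [Module R N] (Q : M →ₗ[R] M →ₗ[R] N) {φ : Module.End R M}

theorem apply_pow_apply_pow_of_invariant (hφ : ∀ x y, Q (φ x) (φ y) = Q x y) (k : ℕ) (x y : M) :
    Q ((φ ^ k) x) ((φ ^ k) y) = Q x y := by
  induction k with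
  | zero => rfl
  | succ k ih => rw [pow_succ', Module.End.mul_apply, Module.End.mul_apply, hφ, ih]

theorem apply_pow_eq_of_pow_apply_eq (hφ : ∀ x y, Q (φ x) (φ y) = Q x y) {n i : ℕ} {z : M}
    (hz : (φ ^ n) z = z) (hi : i ≤ n) (w : M) :
    Q z ((φ ^ i) w) = Q ((φ ^ (n - i)) z) w := by
  have hz' : (φ ^ i) ((φ ^ (n - i)) z) = z := by
    rw [← Module.End.mul_apply, ← pow_add, Nat.add_sub_cancel' hi, hz]
  conv_lhs => rw [← hz']
  exact Q.apply_pow_apply_pow_of_invariant hφ i _ _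

theorem sum_Icc_apply_pow_eq_of_pow_succ_apply_eq (hφ : ∀ x y, Q (φ x) (φ y) = Q x y) {m : ℕ}
    {z : M} (hz : (φ ^ (m + 1)) z = z) (w : M) :
    ∑ i ∈ Icc 1 m, Q z ((φ ^ i) w) = ∑ i ∈ Icc 1 m, Q ((φ ^ i) z) w := by
  rw [← sum_Icc_one_reflect (fun i ↦ Q ((φ ^ i) z) w)]
  refine sum_congr rfl fun i hi ↦ Q.apply_pow_eq_of_pow_apply_eq hφ hz ?_ w
  exact (mem_Icc.mp hi).2.trans m.le_succ

end LinearMap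

theorem stmt_13_general {V : Type*} [AddCommGroup V] [Module ℝ V]
    (Q : V →ₗ[ℝ] V →ₗ[ℝ] ℝ)
    (φ : V →ₗ[ℝ] V) (hφ : ∀ x y, Q (φ x) (φ y) = Q x y)
    (m : ℕ)
    (z₁ : V) (hfix : (φ ^ (m + 1)) z₁ = z₁) :
    ∀ z₂ : V,
      (∑ i ∈ Finset.Icc 1 m, Q ((φ ^ i) z₁) z₂) -
          (∑ i ∈ Finset.Icc 1 m, Q z₁ ((φ ^ i) z₂)) = 0 ∧
      (∑ i ∈ Finset.Icc 1 m, Q ((φ ^ i) z₂) z₁) -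
          (∑ i ∈ Finset.Icc 1 m, Q z₂ ((φ ^ i) z₁)) = 0 := by
  intro z₂
  have hφ_flip : ∀ x y, Q.flip (φ x) (φ y) = Q.flip x y := fun x y ↦ hφ y x
  constructor
  · rw [Q.sum_Icc_apply_pow_eq_of_pow_succ_apply_eq hφ hfix, sub_self]
  · simpa only [LinearMap.flip_apply, sub_eq_zero] using
      (Q.flip.sum_Icc_apply_pow_eq_of_pow_succ_apply_eq hφ_flip hfix z₂)

/-- For a symplectic map φ of a finite-dimensional real symplectic vector
space (V,Q) and m ≥ 1, if φ^{m+1}(z₁) = z₁ then I_{φ,m}(z₁,z₂) = 0 for all z₂ (and, by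
symmetry, I_{φ,m}(z₂,z₁) = 0); hence I_{φ,m} descends to a well-defined symmetric
bilinear pairing on V / ker(φ^{m+1} − id). -/
theorem stmt_13 {V : Type*} [AddCommGroup V] [Module ℝ V] [FiniteDimensional ℝ V]
    (Q : V →ₗ[ℝ] V →ₗ[ℝ] ℝ)
    (hAlt : ∀ x, Q x x = 0)
    (hNd : ∀ x, (∀ y, Q x y = 0) → x = 0)
    (φ : V →ₗ[ℝ] V) (hφ : ∀ x y, Q (φ x) (φ y) = Q x y)
    (m : ℕ) (hm : 1 ≤ m)
    (z₁ : V) (hfix : (φ ^ (m + 1)) z₁ = z₁) :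
    ∀ z₂ : V,
      (∑ i ∈ Finset.Icc 1 m, Q ((φ ^ i) z₁) z₂) -
          (∑ i ∈ Finset.Icc 1 m, Q z₁ ((φ ^ i) z₂)) = 0 ∧
      (∑ i ∈ Finset.Icc 1 m, Q ((φ ^ i) z₂) z₁) -
          (∑ i ∈ Finset.Icc 1 m, Q z₂ ((φ ^ i) z₁)) = 0 :=
  stmt_13_general Q φ hφ m z₁ hfix
end
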